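/- In the multi-block model with p(n) = α log n / n and p′(n) = o(p(n)): if α b_k^{(i)} > 1 for all blocks i and all types k, and n² p′(n) → ∞, then P[G_n is connected] → 1 as n → ∞. -/

import Mathlib

open Finset Filter
open scoped Classical

/-- Probability weight of a specific simple graph `G` on `Fin N` when each edge `{v,w}`
(`v < w`) is present independently with probability `pE v w`. -/
noncomputable def graphWeight {N : ℕ} (pE : Fin N → Fin N → ℝ) (G : SimpleGraph (Fin N)) : ℝ :=
  ∏ v : Fin N, ∏ w ∈ Finset.univ.filter (fun w => v < w),
    (if G.Adj v w then pE v w else 1 - pE v w)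

/-- Probability that the random graph on `Fin N`, whose edges are present independently with
probabilities `pE`, belongs to the set `S`. -/
noncomputable def graphProb {N : ℕ} (pE : Fin N → Fin N → ℝ) (S : Set (SimpleGraph (Fin N))) : ℝ :=
  ∑ G : SimpleGraph (Fin N), (if G ∈ S then graphWeight pE G else 0)

/-- Edge probability in the multi-block model between vertices of global types `s` and `t`
(a global type is a pair of a block index and a type index within the block): within a
block it is `c^{(i)}_{kl} p`, across blocks it is `d_{(i,k),(j,l)} p'`, capped at `1`. -/
noncomputable def blockEdgeP {r : ℕ} {mi : Fin r → ℕ}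
    (cmat : ∀ i, Fin (mi i) → Fin (mi i) → ℝ)
    (d : ((i : Fin r) × Fin (mi i)) → ((i : Fin r) × Fin (mi i)) → ℝ)
    (p p' : ℝ) (s t : (i : Fin r) × Fin (mi i)) : ℝ :=
  if h : s.1 = t.1 then min (cmat s.1 s.2 (Fin.cast (congrArg mi h.symm) t.2) * p) 1
  else min (d s t * p') 1

/-!
If `G_n` is disconnected, then either some block `i` contains a nonempty set `S`, at most half
of the block, with no edge to the rest of the block, or two blocks adjacent in the block graph
have no edge between them.

If `S ⊆` block `i` has type profile `n x`, the expected number of edges from `S` to the rest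
of the block is `p n² Q(x)` with `Q(x) = ∑ c_kl x_k (a_l - x_l)`, and `S` is cut off with
probability at most `exp(-p n² Q(x))`. Near `x = 0` we have
`Q(x) ≥ (min_k b_k - O(|x|)) |x|`, so `Q(x) ≥ γ |x|` for small `|x|`, with `α γ > 1` because
`α b_k > 1`; away from `0` (and from `a`, since `S` is at most half the block), irreducibility
makes `Q` positive and compactness gives `Q ≥ η > 0`. Hence the cut has probability at most
`n^(-α γ |S|) + exp(-α η n log n)`, and summing over all `S` gives
`(1 + n^(-α γ))^(A n) - 1 + 2^(A n) exp(-α η n log n) → 0`.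

Two adjacent blocks have `Θ(n²)` potential edges of probability `≍ p'`, so they stay
unjoined with probability `exp(-Θ(n² p')) → 0`.
-/

section RandomGraph

variable {N : ℕ}

def ltPairs (N : ℕ) : Finset (Fin N × Fin N) := univ.filter fun q => q.1 < q.2

noncomputable def graphEquivBool (N : ℕ) :
    SimpleGraph (Fin N) ≃ ({q : Fin N × Fin N // q.1 < q.2} → Bool) where
  toFun G q := decide (G.Adj q.1.1 q.1.2)
  invFun f := SimpleGraph.fromRel fun v w => ∃ h : v < w, f ⟨(v, w), h⟩
  left_inv G := by
    ext v w
    rcases lt_trichotomy v w with h | rfl | h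
    · simp [h, h.ne, not_lt_of_gt h]
    · simp
    · simp [h, h.ne', not_lt_of_gt h, G.adj_comm]
  right_inv f := by
    funext ⟨⟨v, w⟩, h⟩
    simp [h, h.ne, not_lt_of_gt h]

theorem sum_prod_ltPairs_adj (w : Fin N × Fin N → Bool → ℝ) :
    ∑ G : SimpleGraph (Fin N), ∏ q ∈ ltPairs N, w q (G.Adj q.1 q.2) =
      ∏ q ∈ ltPairs N, (w q true + w q false) := by
  have hsub : ∀ q, q ∈ ltPairs N ↔ q.1 < q.2 := by simp [ltPairs]
  rw [prod_subtype _ hsub, ← (graphEquivBool N).symm.sum_comp]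
  simp_rw [prod_subtype _ hsub, ← Fintype.sum_bool, prod_univ_sum, Fintype.piFinset_univ]
  refine Fintype.sum_congr _ _ fun f => Fintype.prod_congr _ _ fun q => ?_
  congr 1
  exact congrFun ((graphEquivBool N).apply_symm_apply f) q

variable (pE : Fin N → Fin N → ℝ)

theorem graphWeight_eq_prod (G : SimpleGraph (Fin N)) :
    graphWeight pE G =
      ∏ q ∈ ltPairs N, if G.Adj q.1 q.2 then pE q.1 q.2 else 1 - pE q.1 q.2 := by
  rw [graphWeight, ltPairs, prod_filter, Fintype.prod_prod_type]
  exact prod_congr rfl fun v _ => prod_filter _ _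

theorem graphProb_eq_prod_add {S : Set (SimpleGraph (Fin N))} (w : Fin N × Fin N → Bool → ℝ)
    (hw : ∀ G, (if G ∈ S then graphWeight pE G else 0) =
      ∏ q ∈ ltPairs N, w q (G.Adj q.1 q.2)) :
    graphProb pE S = ∏ q ∈ ltPairs N, (w q true + w q false) := by
  rw [graphProb, Fintype.sum_congr _ _ hw, sum_prod_ltPairs_adj]

theorem graphProb_forall_not_adj {F : Finset (Fin N × Fin N)} (hF : F ⊆ ltPairs N) :
    graphProb pE {G | ∀ q ∈ F, ¬ G.Adj q.1 q.2} = ∏ q ∈ F, (1 - pE q.1 q.2) := by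
  -- these weights kill every graph with an edge in `F`
  let w : Fin N × Fin N → Bool → ℝ := fun q b =>
    if b then (if q ∈ F then 0 else pE q.1 q.2) else 1 - pE q.1 q.2
  rw [graphProb_eq_prod_add pE w, ← prod_subset hF fun q _ hq => by simp [w, hq]]
  · exact prod_congr rfl fun q hq => by simp [w, hq]
  intro G
  split_ifs with h
  · rw [graphWeight_eq_prod]
    refine prod_congr rfl fun q _ => ?_
    by_cases hq : G.Adj q.1 q.2
    · simp [w, hq, show q ∉ F from fun hqF => h q hqF hq]
    · simp [w, hq]
  · simp only [Set.mem_ofPred_eq, not_forall, not_not] at h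
    obtain ⟨q, hqF, hq⟩ := h
    exact (prod_eq_zero (hF hqF) (by simp [w, hqF, hq])).symm

theorem graphProb_univ : graphProb pE Set.univ = 1 := by
  simpa using graphProb_forall_not_adj pE (empty_subset (ltPairs N))

theorem graphProb_compl (S : Set (SimpleGraph (Fin N))) :
    graphProb pE Sᶜ = 1 - graphProb pE S := by
  rw [← graphProb_univ pE, graphProb, graphProb, graphProb, ← sum_sub_distrib]
  exact sum_congr rfl fun G _ => by by_cases h : G ∈ S <;> simp [h]

variable {pE} (h0 : ∀ v w, 0 ≤ pE v w) (h1 : ∀ v w, pE v w ≤ 1)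
include h0 h1

theorem graphWeight_nonneg (G : SimpleGraph (Fin N)) : 0 ≤ graphWeight pE G := by
  rw [graphWeight_eq_prod]
  exact prod_nonneg fun q _ => by split_ifs <;> linarith [h0 q.1 q.2, h1 q.1 q.2]

theorem graphProb_nonneg (S : Set (SimpleGraph (Fin N))) : 0 ≤ graphProb pE S :=
  sum_nonneg fun G _ => by split_ifs <;> simp [graphWeight_nonneg h0 h1 G]

theorem graphProb_mono {S T : Set (SimpleGraph (Fin N))} (hST : S ⊆ T) :
    graphProb pE S ≤ graphProb pE T :=
  sum_le_sum fun G _ => by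
    by_cases h : G ∈ S
    · simp [h, hST h]
    · simp only [h, if_false]
      split_ifs <;> simp [graphWeight_nonneg h0 h1 G]

theorem graphProb_union_le (S T : Set (SimpleGraph (Fin N))) :
    graphProb pE (S ∪ T) ≤ graphProb pE S + graphProb pE T := by
  rw [graphProb, graphProb, graphProb, ← sum_add_distrib]
  refine sum_le_sum fun G _ => ?_
  have := graphWeight_nonneg h0 h1 G
  by_cases hS : G ∈ S <;> by_cases hT : G ∈ T <;> simp [hS, hT, this]

theorem graphProb_biUnion_le {ι : Type*} (s : Finset ι) (E : ι → Set (SimpleGraph (Fin N))) :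
    graphProb pE (⋃ i ∈ s, E i) ≤ ∑ i ∈ s, graphProb pE (E i) := by
  induction s using Finset.induction with
  | empty => simp [graphProb]
  | insert i s hi ih =>
    rw [sum_insert hi, set_biUnion_insert]
    exact (graphProb_union_le h0 h1 _ _).trans (by linarith)

end RandomGraph

section Cuts

def noEdgeBetween {V : Type*} (S T : Finset V) : Set (SimpleGraph V) :=
  {G | ∀ v ∈ S, ∀ w ∈ T, ¬ G.Adj v w}

theorem noEdgeBetween_anti {V : Type*} {S S' T T' : Finset V} (hS : S' ⊆ S) (hT : T' ⊆ T) :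
    noEdgeBetween S T ⊆ noEdgeBetween S' T' :=
  fun _ hG v hv w hw => hG v (hS hv) w (hT hw)

theorem noEdgeBetween_comm {V : Type*} {S T : Finset V} {G : SimpleGraph V}
    (hG : G ∈ noEdgeBetween S T) : G ∈ noEdgeBetween T S :=
  fun w hw v hv hwv => hG v hv w hw hwv.symm

variable {N : ℕ} {pE : Fin N → Fin N → ℝ}
  (h0 : ∀ v w, 0 ≤ pE v w) (h1 : ∀ v w, pE v w ≤ 1)
include h0 h1

theorem graphProb_noEdgeBetween_le (hsymm : ∀ v w, pE v w = pE w v) {S T : Finset (Fin N)}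
    (hST : Disjoint S T) :
    graphProb pE (noEdgeBetween S T) ≤ Real.exp (-∑ v ∈ S, ∑ w ∈ T, pE v w) := by
  -- `sort` identifies `S ×ˢ T` with the pairs `v < w` that straddle the cut
  let sort : Fin N × Fin N → Fin N × Fin N := fun q => (min q.1 q.2, max q.1 q.2)
  have hne : ∀ q ∈ S ×ˢ T, q.1 ≠ q.2 := fun q hq h =>
    disjoint_left.mp hST (mem_product.mp hq).1 (h ▸ (mem_product.mp hq).2)
  have hinj : Set.InjOn sort ↑(S ×ˢ T) := by
    rintro ⟨v, w⟩ hvw ⟨v', w'⟩ hvw' h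
    simp only [mem_coe, mem_product, Prod.mk.injEq, sort] at hvw hvw' h ⊢
    have hdisj := disjoint_left.mp hST
    rcases le_total v w with h₁ | h₁ <;> rcases le_total v' w' with h₂ | h₂ <;>
      simp_all
  have hsort : (S ×ˢ T).image sort ⊆ ltPairs N := by
    simp only [subset_iff, mem_image, ltPairs, mem_filter, mem_univ, true_and]
    rintro _ ⟨q, hq, rfl⟩
    exact min_lt_max.mpr (hne q hq)
  have hevent : noEdgeBetween S T ⊆ {G | ∀ q ∈ (S ×ˢ T).image sort, ¬ G.Adj q.1 q.2} := by
    simp only [Set.subset_def, mem_image, Set.mem_ofPred_eq]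
    rintro G hG _ ⟨⟨v, w⟩, hq, rfl⟩
    rw [mem_product] at hq
    rcases le_total v w with h | h
    · simpa [sort, h] using hG v hq.1 w hq.2
    · simpa [sort, h, G.adj_comm] using hG v hq.1 w hq.2
  calc graphProb pE (noEdgeBetween S T)
      ≤ ∏ q ∈ (S ×ˢ T).image sort, (1 - pE q.1 q.2) := by
        rw [← graphProb_forall_not_adj pE hsort]
        exact graphProb_mono h0 h1 hevent
    _ ≤ ∏ q ∈ (S ×ˢ T).image sort, Real.exp (-pE q.1 q.2) :=
        prod_le_prod (fun q _ => by linarith [h1 q.1 q.2])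
          fun q _ => by linarith [Real.add_one_le_exp (-pE q.1 q.2)]
    _ = Real.exp (-∑ v ∈ S, ∑ w ∈ T, pE v w) := by
        rw [← Real.exp_sum, sum_image hinj, ← sum_product', ← sum_neg_distrib]
        refine congrArg Real.exp (sum_congr rfl fun q _ => ?_)
        rcases le_total q.1 q.2 with h | h
        · simp [sort, h]
        · simp [sort, h, hsymm q.1 q.2]

end Cuts

section BlockConnectivity

variable {V ι : Type*} {B : V → ι} {G : SimpleGraph V}

theorem connected_of_reachable_of_adj {H : SimpleGraph ι} (hH : H.Connected)
    (hB : Function.Surjective B) (hin : ∀ v w, B v = B w → G.Reachable v w)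
    (hcross : ∀ i j, H.Adj i j → ∃ v w, B v = i ∧ B w = j ∧ G.Adj v w) : G.Connected := by
  have : Nonempty V := hH.nonempty.map fun i => (hB i).choose
  suffices ∀ i j, H.Walk i j → ∀ v w, B v = i → B w = j → G.Reachable v w from
    ⟨fun v w => (hH.preconnected (B v) (B w)).elim fun p => this _ _ p v w rfl rfl⟩
  intro i j p
  induction p with
  | nil => exact fun v w hv hw => hin v w (hv.trans hw.symm)
  | cons hadj p ih =>
    intro v w hv hw
    obtain ⟨v', w', hv', hw', hadj'⟩ := hcross _ _ hadj
    exact ((hin v v' (hv.trans hv'.symm)).trans hadj'.reachable).trans (ih w' w hw' hw)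

def halfCuts (s : Finset V) : Finset (Finset V) :=
  s.powerset.filter fun S => S.Nonempty ∧ 2 * #S ≤ #s

theorem exists_mem_halfCuts [DecidableEq V] {s S : Finset V} (hS : S ⊆ s) (hne : S.Nonempty)
    (hne' : (s \ S).Nonempty) (hG : G ∈ noEdgeBetween S (s \ S)) :
    ∃ S' ∈ halfCuts s, G ∈ noEdgeBetween S' (s \ S') := by
  have hcard : #(s \ S) = #s - #S := card_sdiff_of_subset hS
  have hlt : #S < #s := card_lt_card (ssubset_of_subset_of_ne hS (by
    rintro rfl; simp at hne'))
  by_cases hhalf : 2 * #S ≤ #s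
  · exact ⟨S, by simp [halfCuts, hS, hne, hhalf], hG⟩
  · refine ⟨s \ S, by simp [halfCuts, hne', hcard]; omega, ?_⟩
    rw [Finset.sdiff_sdiff_eq_self hS]
    exact noEdgeBetween_comm hG

theorem sum_halfCuts_le (s : Finset V) {x e : ℝ} (hx : 0 ≤ x) (he : 0 ≤ e) :
    ∑ S ∈ halfCuts s, (x ^ #S + e) ≤ ((1 + x) ^ #s - 1) + 2 ^ #s * e := by
  have hsub : halfCuts s ⊆ s.powerset.erase ∅ := fun S hS => by
    simp only [halfCuts, mem_filter] at hS
    exact mem_erase.mpr ⟨hS.2.1.ne_empty, hS.1⟩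
  have hpow : ∑ S ∈ s.powerset, x ^ #S = (1 + x) ^ #s := by
    rw [add_comm, ← prod_const, prod_add_one]
    simp
  rw [sum_add_distrib, sum_const, nsmul_eq_mul]
  gcongr
  · calc ∑ S ∈ halfCuts s, x ^ #S ≤ ∑ S ∈ s.powerset.erase ∅, x ^ #S :=
          sum_le_sum_of_subset_of_nonneg hsub fun _ _ _ => by positivity
      _ = (1 + x) ^ #s - 1 := by
          rw [sum_erase_eq_sub (empty_mem_powerset s), hpow, card_empty, pow_zero]
  · exact_mod_cast (card_filter_le _ _).trans (card_powerset s).le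

variable [Fintype V]

variable (B) in
noncomputable def block (i : ι) : Finset V := univ.filter fun v => B v = i

@[simp]
theorem mem_block {v : V} {i : ι} : v ∈ block B i ↔ B v = i := by
  simp [block]

variable [DecidableEq V]

theorem reachable_of_forall_notMem_noEdgeBetween
    (hcut : ∀ i, ∀ S ∈ halfCuts (block B i), G ∉ noEdgeBetween S (block B i \ S))
    {v w : V} (hvw : B v = B w) : G.Reachable v w := by
  by_contra hnot
  let S := (block B (B v)).filter (G.Reachable v)
  have hw : w ∈ block B (B v) \ S := by simp [S, block, hvw, hnot]
  have hS : G ∈ noEdgeBetween S (block B (B v) \ S) := by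
    simp only [noEdgeBetween, Set.mem_ofPred_eq, S, Finset.mem_sdiff, mem_filter]
    exact fun x hx y hy hxy => hy.2 ⟨hy.1, hx.2.trans hxy.reachable⟩
  obtain ⟨S', hS', hG⟩ := exists_mem_halfCuts (filter_subset _ _)
    ⟨v, by simp [block]⟩ ⟨w, hw⟩ hS
  exact hcut _ S' hS' hG

theorem setOf_not_connected_subset [Fintype ι] {H : SimpleGraph ι} [DecidableRel H.Adj]
    (hH : H.Connected) (hB : Function.Surjective B) :
    {G : SimpleGraph V | ¬ G.Connected} ⊆
      (⋃ i ∈ (univ : Finset ι), ⋃ S ∈ halfCuts (block B i),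
          noEdgeBetween S (block B i \ S)) ∪
        ⋃ e ∈ univ.filter (fun e : ι × ι => H.Adj e.1 e.2),
          noEdgeBetween (block B e.1) (block B e.2) := by
  intro G hG
  by_contra hmem
  simp only [Set.mem_union, Set.mem_iUnion, mem_univ, mem_filter, true_and, exists_prop,
    not_or, not_exists, not_and] at hmem
  refine hG (connected_of_reachable_of_adj hH hB
    (fun v w => reachable_of_forall_notMem_noEdgeBetween hmem.1) fun i j hij => ?_)
  by_contra hno
  push Not at hno
  exact hmem.2 (i, j) hij fun v hv w hw => hno v w (mem_block.mp hv) (mem_block.mp hw)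

end BlockConnectivity

theorem graphProb_not_connected_le {N : ℕ} {pE : Fin N → Fin N → ℝ}
    (h0 : ∀ v w, 0 ≤ pE v w) (h1 : ∀ v w, pE v w ≤ 1) {ι : Type*} [Fintype ι] {B : Fin N → ι}
    {H : SimpleGraph ι} [DecidableRel H.Adj] (hH : H.Connected) (hB : Function.Surjective B) :
    graphProb pE {G | ¬ G.Connected} ≤
      ∑ i, ∑ S ∈ halfCuts (block B i), graphProb pE (noEdgeBetween S (block B i \ S)) +
        ∑ e ∈ univ.filter (fun e : ι × ι => H.Adj e.1 e.2),
          graphProb pE (noEdgeBetween (block B e.1) (block B e.2)) := by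
  refine (graphProb_mono h0 h1 (setOf_not_connected_subset hH hB)).trans <|
    (graphProb_union_le h0 h1 _ _).trans (add_le_add ?_ (graphProb_biUnion_le h0 h1 _ _))
  exact (graphProb_biUnion_le h0 h1 _ _).trans
    (sum_le_sum fun i _ => graphProb_biUnion_le h0 h1 _ _)

section CutForm

variable {κ : Type*} [Fintype κ] (c : κ → κ → ℝ) (a : κ → ℝ)

/-- `p n² · cutForm c a x` is the expected number of edges between a set of type profile `n x`
and the rest of a block of type profile `n a`, when every `c k l * p ≤ 1`. -/
def cutForm (x : κ → ℝ) : ℝ := ∑ k, ∑ l, c k l * x k * (a l - x l)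

theorem cutForm_mul (t : ℝ) (x : κ → ℝ) :
    cutForm c (fun k => t * a k) (fun k => t * x k) = t ^ 2 * cutForm c a x := by
  simp only [cutForm, mul_sum]
  exact sum_congr rfl fun k _ => sum_congr rfl fun l _ => by ring

theorem le_cutForm {β C : ℝ} {x : κ → ℝ} (hx : 0 ≤ x)
    (hβ : ∀ k, β ≤ ∑ l, a l * c k l) (hC : ∀ k l, c k l ≤ C) :
    (β - C * ∑ k, x k) * ∑ k, x k ≤ cutForm c a x := by
  have hrow : ∀ k, β - C * ∑ l, x l ≤ ∑ l, c k l * (a l - x l) := fun k => by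
    have : ∑ l, c k l * x l ≤ C * ∑ l, x l :=
      mul_sum univ x C ▸ sum_le_sum fun l _ => mul_le_mul_of_nonneg_right (hC k l) (hx l)
    simp only [mul_sub, sum_sub_distrib]
    linarith [hβ k, sum_congr rfl fun l (_ : l ∈ univ) => mul_comm (a l) (c k l)]
  calc (β - C * ∑ k, x k) * ∑ k, x k = ∑ k, x k * (β - C * ∑ l, x l) := by
        rw [mul_comm, sum_mul]
    _ ≤ ∑ k, x k * ∑ l, c k l * (a l - x l) :=
        sum_le_sum fun k _ => mul_le_mul_of_nonneg_left (hrow k) (hx k)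
    _ = cutForm c a x := by
        simp only [cutForm, mul_sum]
        exact sum_congr rfl fun k _ => sum_congr rfl fun l _ => by ring

variable {c a} (ha : ∀ k, 0 < a k) (hc0 : ∀ k l, 0 ≤ c k l) (hcs : ∀ k l, c k l = c l k)
  (hconn : (SimpleGraph.fromRel fun k l => 0 < c k l).Connected)
include ha hc0 hcs hconn

theorem cutForm_pos (hrow : ∀ k, ∃ l, 0 < c k l) {x : κ → ℝ} (hx0 : 0 ≤ x) (hxa : x ≤ a)
    (hx : 0 < ∑ k, x k) (hax : 0 < ∑ k, (a k - x k)) : 0 < cutForm c a x := by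
  have hterm : ∀ k l, 0 ≤ c k l * x k * (a l - x l) := fun k l =>
    mul_nonneg (mul_nonneg (hc0 k l) (hx0 k)) (sub_nonneg.mpr (hxa l))
  refine (sum_nonneg fun k _ => sum_nonneg fun l _ => hterm k l).lt_of_ne fun hzero => ?_
  have hzero' : ∀ k l, c k l * x k * (a l - x l) = 0 := fun k l =>
    (sum_eq_zero_iff_of_nonneg fun l _ => hterm k l).mp
      ((sum_eq_zero_iff_of_nonneg fun k _ => sum_nonneg fun l _ => hterm k l).mp
        hzero.symm k (mem_univ k)) l (mem_univ l)
  -- a positive entry `x k` forces every neighbour `l` of `k` to be saturated, `x l = a l`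
  have hsat : ∀ k l, 0 < c k l → 0 < x k → x l = a l := fun k l hc hxk => by
    simpa [hc.ne', hxk.ne', sub_eq_zero, eq_comm] using hzero' k l
  have hprop : ∀ u v, (SimpleGraph.fromRel fun k l => 0 < c k l).Walk u v →
      x u = a u → x v = a v := by
    intro u v p
    induction p with
    | nil => exact id
    | @cons u b _ hadj _ ih =>
      refine fun hu => ih (hsat u b ?_ (hu ▸ ha u))
      rcases (SimpleGraph.fromRel_adj _ _ _).mp hadj with ⟨-, h | h⟩
      exacts [h, hcs u b ▸ h]
  obtain ⟨k₀, -, hk₀⟩ :=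
    exists_lt_of_sum_lt (s := univ) (f := 0) (g := x) (by simpa using hx)
  obtain ⟨l₀, hl₀⟩ := hrow k₀
  have hall : ∀ l, x l = a l := fun l =>
    (hconn.preconnected l₀ l).elim fun p => hprop _ _ p (hsat k₀ l₀ hl₀ hk₀)
  simp [hall] at hax

theorem exists_pos_le_cutForm (hrow : ∀ k, ∃ l, 0 < c k l) {ε : ℝ} (hε : 0 < ε) :
    ∃ η > 0, ∀ x, 0 ≤ x → x ≤ a → ε ≤ ∑ k, x k → ε ≤ ∑ k, (a k - x k) →
      η ≤ cutForm c a x := by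
  let K : Set (κ → ℝ) :=
    Set.Icc 0 a ∩ {x | ε ≤ ∑ k, x k} ∩ {x | ε ≤ ∑ k, (a k - x k)}
  have hK : IsCompact K :=
    (isCompact_Icc.inter_right (isClosed_le (by fun_prop) (by fun_prop))).inter_right
      (isClosed_le (by fun_prop) (by fun_prop))
  rcases K.eq_empty_or_nonempty with hKe | hKne
  · exact ⟨1, one_pos, fun x h0 hxa h1 h2 =>
      (hKe.subset ⟨⟨⟨h0, hxa⟩, h1⟩, h2⟩).elim⟩
  obtain ⟨x₀, ⟨⟨⟨h0, hxa⟩, h1⟩, h2⟩, hmin⟩ :=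
    hK.exists_isMinOn hKne (by unfold cutForm; fun_prop : Continuous (cutForm c a)).continuousOn
  exact ⟨_, cutForm_pos ha hc0 hcs hconn hrow h0 hxa (hε.trans_le h1) (hε.trans_le h2),
    fun x h0 hxa h1 h2 => hmin ⟨⟨⟨h0, hxa⟩, h1⟩, h2⟩⟩

theorem exists_min_le_cutForm {γ β : ℝ} (hγ : 0 ≤ γ) (hγβ : γ < β)
    (hβ : ∀ k, β ≤ ∑ l, a l * c k l) :
    ∃ η > 0, ∀ x, 0 ≤ x → x ≤ a → 2 * ∑ k, x k ≤ ∑ k, a k →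
      min (γ * ∑ k, x k) η ≤ cutForm c a x := by
  have hrow : ∀ k, ∃ l, 0 < c k l := fun k => by
    by_contra! h
    have : ∑ l, a l * c k l = 0 :=
      sum_eq_zero fun l _ => by rw [le_antisymm (h l) (hc0 k l), mul_zero]
    linarith [hβ k]
  let C := 1 + ∑ k, ∑ l, c k l
  have hC : ∀ k l, c k l ≤ C := fun k l => by
    have := (single_le_sum (fun l _ => hc0 k l) (mem_univ l)).trans
      (single_le_sum (f := fun k => ∑ l, c k l) (fun k _ => sum_nonneg fun l _ => hc0 k l)
        (mem_univ k))
    linarith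
  have hCpos : 0 < C :=
    add_pos_of_pos_of_nonneg one_pos (sum_nonneg fun k _ => sum_nonneg fun l _ => hc0 k l)
  -- below `(β - γ) / C` the linear bound of `le_cutForm` wins, above it compactness does
  obtain ⟨η, hη, hηle⟩ :=
    exists_pos_le_cutForm ha hc0 hcs hconn hrow (div_pos (sub_pos.mpr hγβ) hCpos)
  refine ⟨η, hη, fun x hx0 hxa hhalf => ?_⟩
  by_cases hsmall : ∑ k, x k ≤ (β - γ) / C
  · refine min_le_of_left_le ((mul_le_mul_of_nonneg_right ?_ (sum_nonneg fun k _ => hx0 k)).trans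
      (le_cutForm c a hx0 hβ hC))
    rw [le_div_iff₀ hCpos] at hsmall
    linarith
  · refine min_le_of_right_le (hηle x hx0 hxa (not_le.mp hsmall).le ?_)
    rw [sum_sub_distrib]
    linarith

theorem exists_one_lt_mul_min_le_cutForm {α : ℝ} (hα : 0 < α)
    (hsup : ∀ k, 1 < α * ∑ l, a l * c k l) :
    ∃ γ, 1 < α * γ ∧ ∃ η > 0, ∀ x, 0 ≤ x → x ≤ a → 2 * ∑ k, x k ≤ ∑ k, a k →
      min (γ * ∑ k, x k) η ≤ cutForm c a x := by
  obtain ⟨k₀, -, hk₀⟩ := exists_min_image univ (fun k => ∑ l, a l * c k l)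
    (univ_nonempty_iff.mpr hconn.nonempty)
  have h₀ := hsup k₀
  have hβ : 1 / α < ∑ l, a l * c k₀ l := by rwa [div_lt_iff₀' hα]
  obtain ⟨η, hη, hcut⟩ := exists_min_le_cutForm ha hc0 hcs hconn
    (γ := (1 / α + ∑ l, a l * c k₀ l) / 2)
    (by linarith [one_div_pos.mpr hα]) (by linarith) fun k => hk₀ k (mem_univ k)
  refine ⟨_, ?_, η, hη, hcut⟩
  rw [mul_div_assoc', mul_add, mul_one_div_cancel hα.ne', lt_div_iff₀ two_pos]
  linarith

end CutForm

section TypeCount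

variable {V τ : Type*} [DecidableEq τ] (typ : V → τ)

noncomputable def typeCount (S : Finset V) (s : τ) : ℝ := #(S.filter fun v => typ v = s)

theorem sum_comp_eq_sum_typeCount [Fintype τ] (S : Finset V) (g : τ → ℝ) :
    ∑ v ∈ S, g (typ v) = ∑ s, typeCount typ S s * g s := by
  rw [← sum_fiberwise S typ]
  refine sum_congr rfl fun s _ => ?_
  rw [sum_congr rfl fun v hv => congrArg g (mem_filter.mp hv).2, sum_const, nsmul_eq_mul,
    typeCount]

theorem sum_typeCount [Fintype τ] (S : Finset V) : ∑ s, typeCount typ S s = #S := by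
  simpa using (sum_comp_eq_sum_typeCount typ S fun _ => 1).symm

theorem typeCount_mono {S T : Finset V} (h : S ⊆ T) (s : τ) :
    typeCount typ S s ≤ typeCount typ T s :=
  Nat.cast_le.mpr (card_le_card (filter_subset_filter _ h))

theorem typeCount_sdiff [DecidableEq V] {S T : Finset V} (h : S ⊆ T) (s : τ) :
    typeCount typ (T \ S) s = typeCount typ T s - typeCount typ S s := by
  have hfilter : (T \ S).filter (fun v => typ v = s) =
      T.filter (fun v => typ v = s) \ S.filter (fun v => typ v = s) := by
    ext v
    simp only [mem_filter, Finset.mem_sdiff]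
    tauto
  rw [typeCount, hfilter, card_sdiff_of_subset (filter_subset_filter _ h),
    Nat.cast_sub (card_le_card (filter_subset_filter _ h))]
  rfl

end TypeCount

section BlockTypeCount

variable {V : Type*} {r : ℕ} {mi : Fin r → ℕ} (typ : V → (i : Fin r) × Fin (mi i))

theorem sum_typeCount_sigma {S : Finset V} {i : Fin r} (hS : ∀ v ∈ S, (typ v).1 = i)
    (g : ((i : Fin r) × Fin (mi i)) → ℝ) :
    ∑ s, typeCount typ S s * g s = ∑ k, typeCount typ S ⟨i, k⟩ * g ⟨i, k⟩ := by
  rw [← univ_sigma_univ, sum_sigma, sum_eq_single i]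
  · intro j _ hji
    refine sum_eq_zero fun k _ => ?_
    have : typeCount typ S ⟨j, k⟩ = 0 := by
      simp only [typeCount, Nat.cast_eq_zero, card_eq_zero, filter_eq_empty_iff]
      exact fun v hv h => hji (by rw [← hS v hv, h])
    rw [this, zero_mul]
  · simp

theorem card_eq_sum_typeCount_sigma {S : Finset V} {i : Fin r} (hS : ∀ v ∈ S, (typ v).1 = i) :
    (#S : ℝ) = ∑ k, typeCount typ S ⟨i, k⟩ := by
  simpa using (sum_typeCount typ S).symm.trans (by simpa using sum_typeCount_sigma typ hS 1)

theorem typeCount_block [Fintype V] (i : Fin r) (k : Fin (mi i)) :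
    typeCount typ (block (fun v => (typ v).1) i) ⟨i, k⟩ = typeCount typ univ ⟨i, k⟩ := by
  unfold typeCount block
  congr 2
  ext v
  simp only [mem_filter, mem_univ, true_and, and_iff_right_iff_imp]
  exact fun h => by rw [h]

end BlockTypeCount

section BlockEdgeP

variable {r : ℕ} {mi : Fin r → ℕ} (cmat : ∀ i, Fin (mi i) → Fin (mi i) → ℝ)
  (d : ((i : Fin r) × Fin (mi i)) → ((i : Fin r) × Fin (mi i)) → ℝ) (p p' : ℝ)

theorem blockEdgeP_same (i : Fin r) (k l : Fin (mi i)) :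
    blockEdgeP cmat d p p' ⟨i, k⟩ ⟨i, l⟩ = min (cmat i k l * p) 1 := by
  simp [blockEdgeP]

theorem blockEdgeP_of_ne {i j : Fin r} (h : i ≠ j) (k : Fin (mi i)) (l : Fin (mi j)) :
    blockEdgeP cmat d p p' ⟨i, k⟩ ⟨j, l⟩ = min (d ⟨i, k⟩ ⟨j, l⟩ * p') 1 :=
  dif_neg h

theorem blockEdgeP_le_one (s t : (i : Fin r) × Fin (mi i)) : blockEdgeP cmat d p p' s t ≤ 1 := by
  unfold blockEdgeP
  split <;> exact min_le_right _ _

variable {cmat d p p'}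

theorem blockEdgeP_nonneg (hcnn : ∀ i k l, 0 ≤ cmat i k l) (hdnn : ∀ s t, 0 ≤ d s t)
    (hp : 0 ≤ p) (hp' : 0 ≤ p') (s t : (i : Fin r) × Fin (mi i)) :
    0 ≤ blockEdgeP cmat d p p' s t := by
  unfold blockEdgeP
  split
  · exact le_min (mul_nonneg (hcnn _ _ _) hp) zero_le_one
  · exact le_min (mul_nonneg (hdnn _ _) hp') zero_le_one

theorem blockEdgeP_log_nonneg (hcnn : ∀ i k l, 0 ≤ cmat i k l) (hdnn : ∀ s t, 0 ≤ d s t)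
    {α : ℝ} (hα : 0 ≤ α) (hp' : 0 ≤ p') (n : ℕ) (s t : (i : Fin r) × Fin (mi i)) :
    0 ≤ blockEdgeP cmat d (α * Real.log n / n) p' s t :=
  blockEdgeP_nonneg hcnn hdnn
    (div_nonneg (mul_nonneg hα (Real.log_natCast_nonneg n)) n.cast_nonneg) hp' s t

theorem blockEdgeP_comm (hcsymm : ∀ i k l, cmat i k l = cmat i l k)
    (hdsymm : ∀ s t, d s t = d t s) (s t : (i : Fin r) × Fin (mi i)) :
    blockEdgeP cmat d p p' s t = blockEdgeP cmat d p p' t s := by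
  obtain ⟨i, k⟩ := s
  obtain ⟨j, l⟩ := t
  by_cases h : i = j
  · subst h
    rw [blockEdgeP_same, blockEdgeP_same, hcsymm]
  · rw [blockEdgeP_of_ne cmat d p p' h, blockEdgeP_of_ne cmat d p p' (Ne.symm h), hdsymm]

end BlockEdgeP

section MultiBlock

variable {r : ℕ} {mi : Fin r → ℕ} {cmat : ∀ i, Fin (mi i) → Fin (mi i) → ℝ}
  {d : ((i : Fin r) × Fin (mi i)) → ((i : Fin r) × Fin (mi i)) → ℝ}
  {N : ℕ} (typ : Fin N → (i : Fin r) × Fin (mi i))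

theorem sum_blockEdgeP_cut {p p' : ℝ} {i : Fin r} (hp : ∀ k l, cmat i k l * p ≤ 1)
    {S s : Finset (Fin N)} (hSs : S ⊆ s) (hs : ∀ v ∈ s, (typ v).1 = i) :
    ∑ v ∈ S, ∑ w ∈ s \ S, blockEdgeP cmat d p p' (typ v) (typ w) =
      p * cutForm (cmat i) (fun k => typeCount typ s ⟨i, k⟩)
        (fun k => typeCount typ S ⟨i, k⟩) := by
  have hS : ∀ v ∈ S, (typ v).1 = i := fun v hv => hs v (hSs hv)
  have hT : ∀ v ∈ s \ S, (typ v).1 = i := fun v hv => hs v (sdiff_subset hv)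
  rw [sum_comp_eq_sum_typeCount typ S fun t => ∑ w ∈ s \ S, blockEdgeP cmat d p p' t (typ w),
    sum_typeCount_sigma typ hS, cutForm, mul_sum]
  refine sum_congr rfl fun k _ => ?_
  rw [sum_comp_eq_sum_typeCount typ, sum_typeCount_sigma typ hT]
  simp only [mul_sum]
  refine sum_congr rfl fun l _ => ?_
  rw [blockEdgeP_same, min_eq_left (hp k l), typeCount_sdiff typ hSs]
  ring

theorem card_block_eq {a : ∀ i, Fin (mi i) → ℝ} {n : ℕ}
    (hcard : ∀ s, (#(univ.filter fun v => typ v = s) : ℝ) = a s.1 s.2 * n) (i : Fin r) :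
    (#(block (fun v => (typ v).1) i) : ℝ) = (∑ k, a i k) * n := by
  rw [card_eq_sum_typeCount_sigma typ fun v => mem_block.mp, sum_mul]
  exact sum_congr rfl fun k _ => by rw [typeCount_block, typeCount, hcard]

theorem surjective_fst_typ {a : ∀ i, Fin (mi i) → ℝ} (ha : ∀ i k, 0 < a i k)
    (hmi : ∀ i, Nonempty (Fin (mi i))) {n : ℕ} (hn : 0 < n)
    (hcard : ∀ s, (#(univ.filter fun v => typ v = s) : ℝ) = a s.1 s.2 * n) :
    Function.Surjective fun v => (typ v).1 := fun i => by
  obtain ⟨k⟩ := hmi i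
  have hpos : (0 : ℝ) < #(univ.filter fun v => typ v = ⟨i, k⟩) := by
    rw [hcard]
    exact mul_pos (ha i k) (Nat.cast_pos.mpr hn)
  obtain ⟨v, hv⟩ := card_pos.mp (Nat.cast_pos.mp hpos)
  exact ⟨v, congrArg Sigma.fst (mem_filter.mp hv).2⟩

theorem min_le_sum_blockEdgeP_halfCut {a : ∀ i, Fin (mi i) → ℝ} {α p' : ℝ} (hα : 0 ≤ α)
    {n : ℕ} (hn : 0 < n)
    (hcard : ∀ s, (#(univ.filter fun v => typ v = s) : ℝ) = a s.1 s.2 * n)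
    {i : Fin r} (hp : ∀ k l, cmat i k l * (α * Real.log n / n) ≤ 1) {γ η : ℝ}
    (hcut : ∀ x, 0 ≤ x → x ≤ a i → 2 * ∑ k, x k ≤ ∑ k, a i k →
      min (γ * ∑ k, x k) η ≤ cutForm (cmat i) (a i) x)
    {S : Finset (Fin N)} (hS : S ∈ halfCuts (block (fun v => (typ v).1) i)) :
    α * Real.log n * n * min (γ * (#S / n)) η ≤
      ∑ v ∈ S, ∑ w ∈ block (fun v => (typ v).1) i \ S,
        blockEdgeP cmat d (α * Real.log n / n) p' (typ v) (typ w) := by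
  set s := block (fun v => (typ v).1) i
  obtain ⟨hSs, -, hhalf⟩ : S ⊆ s ∧ S.Nonempty ∧ 2 * #S ≤ #s := by
    simpa [halfCuts] using hS
  have hs : ∀ v ∈ s, (typ v).1 = i := by simp [s]
  have hn' : (0 : ℝ) < n := Nat.cast_pos.mpr hn
  let x : Fin (mi i) → ℝ := fun k => typeCount typ S ⟨i, k⟩ / n
  have hsx : ∀ k, typeCount typ S ⟨i, k⟩ = n * x k := fun k =>
    (mul_div_cancel₀ _ hn'.ne').symm
  have hsa : ∀ k, typeCount typ s ⟨i, k⟩ = n * a i k := fun k => by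
    rw [typeCount_block, typeCount, hcard, mul_comm]
  have hsum : ∑ k, x k = #S / n := by
    rw [card_eq_sum_typeCount_sigma typ fun v hv => hs v (hSs hv), sum_div]
  have hxa : x ≤ a i := fun k => by
    rw [div_le_iff₀ hn', mul_comm, ← hsa]
    exact typeCount_mono typ hSs _
  have hhalf' : 2 * ∑ k, x k ≤ ∑ k, a i k := by
    rw [hsum, mul_div_assoc', div_le_iff₀ hn', ← card_block_eq typ hcard]
    exact_mod_cast hhalf
  rw [sum_blockEdgeP_cut typ hp hSs hs, funext hsa, funext hsx, cutForm_mul, ← hsum]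
  calc α * Real.log n * n * min (γ * ∑ k, x k) η
      ≤ α * Real.log n * n * cutForm (cmat i) (a i) x := by
        gcongr
        exact hcut x (fun k => div_nonneg (Nat.cast_nonneg _) hn'.le) hxa hhalf'
    _ = _ := by field_simp

variable (hcnn : ∀ i k l, 0 ≤ cmat i k l) (hcsymm : ∀ i k l, cmat i k l = cmat i l k)
  (hdnn : ∀ s t, 0 ≤ d s t) (hdsymm : ∀ s t, d s t = d t s)
  {a : ∀ i, Fin (mi i) → ℝ} {α p' : ℝ} (hα : 0 < α) (hp' : 0 ≤ p') {n : ℕ}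
  (hcard : ∀ s, (#(univ.filter fun v => typ v = s) : ℝ) = a s.1 s.2 * n)
include hcnn hcsymm hdnn hdsymm hα hp' hcard

theorem graphProb_noEdgeBetween_halfCut_le (hn : 0 < n) {i : Fin r}
    (hp : ∀ k l, cmat i k l * (α * Real.log n / n) ≤ 1) {γ η : ℝ}
    (hcut : ∀ x, 0 ≤ x → x ≤ a i → 2 * ∑ k, x k ≤ ∑ k, a i k →
      min (γ * ∑ k, x k) η ≤ cutForm (cmat i) (a i) x)
    {S : Finset (Fin N)} (hS : S ∈ halfCuts (block (fun v => (typ v).1) i)) :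
    graphProb (fun v w => blockEdgeP cmat d (α * Real.log n / n) p' (typ v) (typ w))
        (noEdgeBetween S (block (fun v => (typ v).1) i \ S)) ≤
      ((n : ℝ) ^ (-(α * γ))) ^ #S + Real.exp (-(α * η * (n * Real.log n))) := by
  have hn' : (0 : ℝ) < n := Nat.cast_pos.mpr hn
  have hscale : 0 ≤ α * Real.log n * n := by positivity
  refine (graphProb_noEdgeBetween_le
    (fun v w => blockEdgeP_log_nonneg hcnn hdnn hα.le hp' _ _ _)
    (fun v w => blockEdgeP_le_one _ _ _ _ _ _)
    (fun v w => blockEdgeP_comm hcsymm hdsymm _ _) disjoint_sdiff).trans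
    ((Real.exp_le_exp.mpr (neg_le_neg
      (min_le_sum_blockEdgeP_halfCut typ hα.le hn hcard hp hcut hS))).trans ?_)
  rw [mul_min_of_nonneg _ _ hscale, Real.rpow_def_of_pos hn', ← Real.exp_nat_mul]
  rcases min_choice (α * Real.log n * n * (γ * (#S / n))) (α * Real.log n * n * η) with h | h
  · rw [h]
    refine le_add_of_le_of_nonneg (le_of_eq (congrArg Real.exp ?_)) (Real.exp_nonneg _)
    linear_combination (-(α * Real.log n * γ)) * mul_div_cancel₀ (#S : ℝ) hn'.ne'
  · rw [h]
    refine le_add_of_nonneg_of_le (by positivity) (le_of_eq (congrArg Real.exp ?_))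
    ring

theorem graphProb_noEdgeBetween_blocks_le {i j : Fin r} (hij : i ≠ j) (k : Fin (mi i))
    (l : Fin (mi j)) :
    graphProb (fun v w => blockEdgeP cmat d (α * Real.log n / n) p' (typ v) (typ w))
        (noEdgeBetween (block (fun v => (typ v).1) i) (block (fun v => (typ v).1) j)) ≤
      Real.exp (-(a i k * a j l * (n ^ 2 * min (d ⟨i, k⟩ ⟨j, l⟩ * p') 1))) := by
  let cls : ((i : Fin r) × Fin (mi i)) → Finset (Fin N) := fun s =>
    univ.filter fun v => typ v = s
  have hcls : ∀ s, cls s ⊆ block (fun v => (typ v).1) s.1 := fun s v hv =>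
    mem_block.mpr (by rw [(mem_filter.mp hv).2])
  have hdisj : Disjoint (cls ⟨i, k⟩) (cls ⟨j, l⟩) := disjoint_filter.mpr fun v _ hv hv' =>
    hij (congrArg Sigma.fst (hv.symm.trans hv'))
  calc _ ≤ graphProb (fun v w => blockEdgeP cmat d (α * Real.log n / n) p' (typ v) (typ w))
        (noEdgeBetween (cls ⟨i, k⟩) (cls ⟨j, l⟩)) :=
        graphProb_mono (fun v w => blockEdgeP_log_nonneg hcnn hdnn hα.le hp' _ _ _)
          (fun v w => blockEdgeP_le_one _ _ _ _ _ _) (noEdgeBetween_anti (hcls _) (hcls _))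
    _ ≤ _ := graphProb_noEdgeBetween_le
          (fun v w => blockEdgeP_log_nonneg hcnn hdnn hα.le hp' _ _ _)
          (fun v w => blockEdgeP_le_one _ _ _ _ _ _)
          (fun v w => blockEdgeP_comm hcsymm hdsymm _ _) hdisj
    _ = _ := by
        have hconst : ∀ v ∈ cls ⟨i, k⟩, ∑ w ∈ cls ⟨j, l⟩,
            blockEdgeP cmat d (α * Real.log n / n) p' (typ v) (typ w) =
              #(cls ⟨j, l⟩) * min (d ⟨i, k⟩ ⟨j, l⟩ * p') 1 := fun v hv => by
          rw [sum_congr rfl fun w hw => by rw [(mem_filter.mp hv).2, (mem_filter.mp hw).2,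
            blockEdgeP_of_ne _ _ _ _ hij], sum_const, nsmul_eq_mul]
        rw [sum_congr rfl hconst, sum_const, nsmul_eq_mul, hcard, hcard]
        ring_nf

end MultiBlock

section Asymptotics

open Topology

theorem tendsto_one_add_pow_sub_one {ι : Type*} {l : Filter ι} {x : ι → ℝ} {M : ι → ℕ}
    (hx : ∀ n, 0 ≤ x n) (h : Tendsto (fun n => M n * x n) l (𝓝 0)) :
    Tendsto (fun n => (1 + x n) ^ M n - 1) l (𝓝 0) := by
  have hexp : Tendsto (fun n => Real.exp (M n * x n) - 1) l (𝓝 0) := by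
    simpa using ((Real.continuous_exp.tendsto 0).comp h).sub_const 1
  refine squeeze_zero (fun n => sub_nonneg.mpr (one_le_pow₀ (by linarith [hx n])))
    (fun n => ?_) hexp
  rw [Real.exp_nat_mul]
  exact sub_le_sub_right (pow_le_pow_left₀ (by linarith [hx n])
    (by linarith [Real.add_one_le_exp (x n)]) _) 1

theorem tendsto_mul_natCast_mul_rpow_neg (A : ℝ) {κ : ℝ} (hκ : 1 < κ) :
    Tendsto (fun n : ℕ => A * n * (n : ℝ) ^ (-κ)) atTop (𝓝 0) := by
  have h := ((tendsto_rpow_neg_atTop (sub_pos.mpr hκ)).comp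
    tendsto_natCast_atTop_atTop).const_mul A
  rw [mul_zero] at h
  refine h.congr' (eventually_gt_atTop 0 |>.mono fun n hn => ?_)
  have hn' : (0 : ℝ) < n := Nat.cast_pos.mpr hn
  simp only [Function.comp_apply]
  rw [show -(κ - 1) = 1 + -κ by ring, Real.rpow_add hn', Real.rpow_one, mul_assoc]

theorem tendsto_two_pow_mul_exp_neg_mul_log {A c : ℝ} (hc : 0 < c) {M : ℕ → ℕ}
    (hM : ∀ n, (M n : ℝ) = A * n) :
    Tendsto (fun n : ℕ => 2 ^ M n * Real.exp (-(c * (n * Real.log n)))) atTop (𝓝 0) := by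
  have hlin : Tendsto (fun n : ℕ => A * Real.log 2 - c * Real.log n) atTop atBot :=
    tendsto_atBot_add_const_left _ _ <| tendsto_neg_atTop_atBot.comp <|
      (Real.tendsto_log_atTop.comp tendsto_natCast_atTop_atTop).const_mul_atTop hc
  refine (Real.tendsto_exp_atBot.comp
    (tendsto_natCast_atTop_atTop.atTop_mul_atBot₀ hlin)).congr fun n => ?_
  rw [Function.comp_apply, ← Real.exp_log (two_pos : (0 : ℝ) < 2), ← Real.exp_nat_mul,
    ← Real.exp_add, hM, Real.exp_log two_pos]
  ring_nf

end Asymptotics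

section MultiBlockAsymptotics

open Topology

variable {r : ℕ} {mi : Fin r → ℕ} {a : ∀ i, Fin (mi i) → ℝ}
  {cmat : ∀ i, Fin (mi i) → Fin (mi i) → ℝ}
  {d : ((i : Fin r) × Fin (mi i)) → ((i : Fin r) × Fin (mi i)) → ℝ}
  {α : ℝ} {p' : ℕ → ℝ}
  {N : ℕ → ℕ} {typ : ∀ n, Fin (N n) → (i : Fin r) × Fin (mi i)}
  (hcnn : ∀ i k l, 0 ≤ cmat i k l) (hcsymm : ∀ i k l, cmat i k l = cmat i l k)
  (hdnn : ∀ s t, 0 ≤ d s t) (hdsymm : ∀ s t, d s t = d t s) (hα : 0 < α)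
  (hp'nn : ∀ n, 0 ≤ p' n)
  (hcard : ∀ n (s : (i : Fin r) × Fin (mi i)),
    (#(univ.filter fun v => typ n v = s) : ℝ) = a s.1 s.2 * n)
include hcnn hcsymm hdnn hdsymm hα hp'nn hcard

theorem tendsto_sum_graphProb_halfCuts (ha : ∀ i k, 0 < a i k) (i : Fin r)
    (hirr : (SimpleGraph.fromRel fun k l : Fin (mi i) => 0 < cmat i k l).Connected)
    (hsup : ∀ k, 1 < α * ∑ l, a i l * cmat i k l) :
    Tendsto (fun n : ℕ => ∑ S ∈ halfCuts (block (fun v => (typ n v).1) i),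
      graphProb (fun v w => blockEdgeP cmat d (α * Real.log n / n) (p' n) (typ n v) (typ n w))
        (noEdgeBetween S (block (fun v => (typ n v).1) i \ S))) atTop (𝓝 0) := by
  obtain ⟨γ, hγ, η, hη, hcut⟩ :=
    exists_one_lt_mul_min_le_cutForm (ha i) (hcnn i) (hcsymm i) hirr hα hsup
  have hp : Tendsto (fun n : ℕ => α * Real.log n / n) atTop (𝓝 0) := by
    simpa [mul_div_assoc] using ((Real.isLittleO_log_id_atTop.tendsto_div_nhds_zero).comp
      tendsto_natCast_atTop_atTop).const_mul α
  have hsmall : ∀ᶠ n : ℕ in atTop, ∀ k l, cmat i k l * (α * Real.log n / n) ≤ 1 :=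
    eventually_all.mpr fun k => eventually_all.mpr fun l =>
      (((hp.const_mul (cmat i k l)).eventually_lt_const (by simp)).mono fun _ h => h.le)
  have hbound : Tendsto (fun n : ℕ =>
      ((1 + (n : ℝ) ^ (-(α * γ))) ^ #(block (fun v => (typ n v).1) i) - 1) +
        2 ^ #(block (fun v => (typ n v).1) i) * Real.exp (-(α * η * (n * Real.log n))))
      atTop (𝓝 0) := by
    simpa using (tendsto_one_add_pow_sub_one (fun n => by positivity)
      (by simpa only [card_block_eq (typ _) (hcard _)] using
        tendsto_mul_natCast_mul_rpow_neg (∑ k, a i k) hγ)).add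
      (tendsto_two_pow_mul_exp_neg_mul_log (mul_pos hα hη)
        fun n => card_block_eq (typ n) (hcard n) i)
  refine squeeze_zero' (Eventually.of_forall fun n => sum_nonneg fun S _ =>
    graphProb_nonneg (fun v w => blockEdgeP_log_nonneg hcnn hdnn hα.le (hp'nn n) n _ _)
      (fun v w => blockEdgeP_le_one _ _ _ _ _ _) _) ?_ hbound
  filter_upwards [eventually_gt_atTop 0, hsmall] with n hn hsmall
  exact (sum_le_sum fun S hS => graphProb_noEdgeBetween_halfCut_le (typ n) hcnn hcsymm hdnn hdsymm
    hα (hp'nn n) (hcard n) hn hsmall hcut hS).trans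
      (sum_halfCuts_le _ (by positivity) (Real.exp_nonneg _))

theorem tendsto_graphProb_noEdgeBetween_blocks (ha : ∀ i k, 0 < a i k)
    (hp'big : Tendsto (fun n : ℕ => (n : ℝ) ^ 2 * p' n) atTop atTop) {i j : Fin r}
    (hij : (SimpleGraph.fromRel fun i j : Fin r => ∃ k l, 0 < d ⟨i, k⟩ ⟨j, l⟩).Adj i j) :
    Tendsto (fun n : ℕ =>
      graphProb (fun v w => blockEdgeP cmat d (α * Real.log n / n) (p' n) (typ n v) (typ n w))
        (noEdgeBetween (block (fun v => (typ n v).1) i) (block (fun v => (typ n v).1) j)))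
      atTop (𝓝 0) := by
  obtain ⟨hne, k, l, hkl⟩ : i ≠ j ∧ ∃ k l, 0 < d ⟨i, k⟩ ⟨j, l⟩ := by
    obtain ⟨hne, h | ⟨l, k, h⟩⟩ := hij
    · exact ⟨hne, h⟩
    · exact ⟨hne, k, l, hdsymm _ _ ▸ h⟩
  have hmin : Tendsto (fun n : ℕ => (n : ℝ) ^ 2 * min (d ⟨i, k⟩ ⟨j, l⟩ * p' n) 1)
      atTop atTop := by
    refine tendsto_atTop.mpr fun b => ?_
    filter_upwards [tendsto_atTop.mp (hp'big.const_mul_atTop hkl) b,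
      tendsto_atTop.mp ((tendsto_pow_atTop two_ne_zero).comp tendsto_natCast_atTop_atTop) b]
      with n h₁ h₂
    rw [mul_min_of_nonneg _ _ (sq_nonneg _), mul_one, mul_left_comm]
    exact le_min h₁ h₂
  refine squeeze_zero (fun n => graphProb_nonneg
      (fun v w => blockEdgeP_log_nonneg hcnn hdnn hα.le (hp'nn n) n _ _)
      (fun v w => blockEdgeP_le_one _ _ _ _ _ _) _)
    (fun n => graphProb_noEdgeBetween_blocks_le (typ n) hcnn hcsymm hdnn hdsymm hα (hp'nn n)
      (hcard n) hne k l) ?_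
  exact Real.tendsto_exp_atBot.comp (tendsto_neg_atTop_atBot.comp
    (hmin.const_mul_atTop (mul_pos (ha i k) (ha j l))))

end MultiBlockAsymptotics

theorem multiblock_connectivity_supercritical_general
    (r : ℕ) (mi : Fin r → ℕ)
    (a : ∀ i, Fin (mi i) → ℝ) (ha : ∀ i k, 0 < a i k)
    (cmat : ∀ i, Fin (mi i) → Fin (mi i) → ℝ)
    (hcsymm : ∀ i k l, cmat i k l = cmat i l k) (hcnn : ∀ i k l, 0 ≤ cmat i k l)
    (hirr : ∀ i, (SimpleGraph.fromRel (fun k l : Fin (mi i) => 0 < cmat i k l)).Connected)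
    (d : ((i : Fin r) × Fin (mi i)) → ((i : Fin r) × Fin (mi i)) → ℝ)
    (hdsymm : ∀ s t, d s t = d t s) (hdnn : ∀ s t, 0 ≤ d s t)
    (hblk : (SimpleGraph.fromRel
      (fun i j : Fin r => ∃ k l, 0 < d ⟨i, k⟩ ⟨j, l⟩)).Connected)
    (α : ℝ) (hα : 0 < α)
    (p' : ℕ → ℝ) (hp'nn : ∀ n, 0 ≤ p' n)
    (N : ℕ → ℕ) (typ : ∀ n, Fin (N n) → (i : Fin r) × Fin (mi i))
    (hcard : ∀ n (s : (i : Fin r) × Fin (mi i)),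
      (((Finset.univ.filter fun v => typ n v = s)).card : ℝ) = a s.1 s.2 * n)
    (hsup : ∀ i k, 1 < α * (∑ l, a i l * cmat i k l))
    (hp'big : Tendsto (fun n : ℕ => (n : ℝ) ^ 2 * p' n) atTop atTop) :
    Tendsto (fun n : ℕ =>
        graphProb (fun v w =>
            blockEdgeP cmat d (α * Real.log n / n) (p' n) (typ n v) (typ n w))
          {G | G.Connected})
      atTop (nhds 1) := by
  have h0 : ∀ n : ℕ, ∀ v w : Fin (N n),
      0 ≤ blockEdgeP cmat d (α * Real.log n / n) (p' n) (typ n v) (typ n w) :=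
    fun n _ _ => blockEdgeP_log_nonneg hcnn hdnn hα.le (hp'nn n) n _ _
  have h1 : ∀ n : ℕ, ∀ v w : Fin (N n),
      blockEdgeP cmat d (α * Real.log n / n) (p' n) (typ n v) (typ n w) ≤ 1 :=
    fun n _ _ => blockEdgeP_le_one _ _ _ _ _ _
  have hcuts := tendsto_finsetSum univ fun i _ => tendsto_sum_graphProb_halfCuts hcnn hcsymm
    hdnn hdsymm hα hp'nn hcard ha i (hirr i) (hsup i)
  have hcross := tendsto_finsetSum (univ.filter fun e : Fin r × Fin r => _) fun e he =>
    tendsto_graphProb_noEdgeBetween_blocks hcnn hcsymm hdnn hdsymm hα hp'nn hcard ha hp'big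
      (i := e.1) (j := e.2) (mem_filter.mp he).2
  have hdisconnected : Tendsto (fun n : ℕ =>
      graphProb (fun v w => blockEdgeP cmat d (α * Real.log n / n) (p' n) (typ n v) (typ n w))
        {G | ¬ G.Connected}) atTop (nhds 0) := by
    refine squeeze_zero' (Eventually.of_forall fun n => graphProb_nonneg (h0 n) (h1 n) _) ?_
      (by simpa only [sum_const_zero, add_zero] using hcuts.add hcross)
    filter_upwards [eventually_gt_atTop 0] with n hn
    exact graphProb_not_connected_le (h0 n) (h1 n) hblk
      (surjective_fst_typ (typ n) ha (fun i => (hirr i).nonempty) hn (hcard n))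
  refine (sub_zero (1 : ℝ) ▸ hdisconnected.const_sub 1).congr fun n => ?_
  rw [← graphProb_compl]
  congr 1
  ext G
  simp

/-- Multi-block model with `p(n) = α log n / n` and `p'(n) = o(p(n))`:
if `α b_k^{(i)} > 1` for all blocks `i` and types `k`, and `n² p'(n) → ∞`, then the graph
is connected w.h.p. -/
theorem multiblock_connectivity_supercritical
    (r : ℕ) (hr : 0 < r) (mi : Fin r → ℕ) (hmi : ∀ i, 0 < mi i)
    (a : ∀ i, Fin (mi i) → ℝ) (ha : ∀ i k, 0 < a i k)
    (cmat : ∀ i, Fin (mi i) → Fin (mi i) → ℝ)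
    (hcsymm : ∀ i k l, cmat i k l = cmat i l k) (hcnn : ∀ i k l, 0 ≤ cmat i k l)
    (hirr : ∀ i, (SimpleGraph.fromRel (fun k l : Fin (mi i) => 0 < cmat i k l)).Connected)
    (d : ((i : Fin r) × Fin (mi i)) → ((i : Fin r) × Fin (mi i)) → ℝ)
    (hdsymm : ∀ s t, d s t = d t s) (hdnn : ∀ s t, 0 ≤ d s t)
    (hblk : (SimpleGraph.fromRel
      (fun i j : Fin r => ∃ k l, 0 < d ⟨i, k⟩ ⟨j, l⟩)).Connected)
    (α : ℝ) (hα : 0 < α)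
    (p' : ℕ → ℝ) (hp'nn : ∀ n, 0 ≤ p' n)
    (hp'o : p' =o[atTop] fun n : ℕ => α * Real.log n / n)
    (N : ℕ → ℕ) (typ : ∀ n, Fin (N n) → (i : Fin r) × Fin (mi i))
    (hcard : ∀ n (s : (i : Fin r) × Fin (mi i)),
      (((Finset.univ.filter fun v => typ n v = s)).card : ℝ) = a s.1 s.2 * n)
    (hsup : ∀ i k, 1 < α * (∑ l, a i l * cmat i k l))
    (hp'big : Tendsto (fun n : ℕ => (n : ℝ) ^ 2 * p' n) atTop atTop) :
    Tendsto (fun n : ℕ =>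
        graphProb (fun v w =>
            blockEdgeP cmat d (α * Real.log n / n) (p' n) (typ n v) (typ n w))
          {G | G.Connected})
      atTop (nhds 1) :=
  multiblock_connectivity_supercritical_general r mi a ha cmat hcsymm hcnn hirr d hdsymm hdnn hblk α
    hα p' hp'nn N typ hcard hsup hp'big
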